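/- Let G be a non-abelian connected compact Lie group. Then for every g ∈ G, μ²(α⁻¹(g)) = 0; that is, every fiber of the commutator map has measure zero. -/

import Mathlib

/-!
A closed subgroup of positive Haar measure is open by Steinhaus' theorem, so in a connected group
every closed proper subgroup is null; this applies to the center and to the centralizer of each
noncentral `x`. For fixed `x`, the `y` with `x y x⁻¹ y⁻¹ = g` form at most one left coset of the
centralizer of `x`, so almost every slice of the fiber is null, and Fubini concludes.
-/

open MeasureTheory Pointwise

theorem Subgroup.measure_eq_zero_of_isClosed_of_ne_top
    {G : Type*} [Group G] [TopologicalSpace G] [IsTopologicalGroup G] [LocallyCompactSpace G]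
    [ConnectedSpace G] [MeasurableSpace G] [BorelSpace G]
    (μ : Measure G) [μ.IsHaarMeasure] [μ.InnerRegular]
    {K : Subgroup G} (hK : IsClosed (K : Set G)) (hKtop : K ≠ ⊤) : μ K = 0 := by
  by_contra hpos
  have hopen : IsOpen (K : Set G) := K.isOpen_of_mem_nhds <| Filter.mem_of_superset
    (Measure.div_mem_nhds_one_of_haar_pos μ K hK.measurableSet (pos_iff_ne_zero.2 hpos))
    (Set.div_subset_iff.2 fun _ ha _ hb => K.div_mem ha hb)
  exact hKtop (SetLike.coe_injective (IsClopen.eq_univ ⟨hK, hopen⟩ ⟨1, K.one_mem⟩))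

theorem setOf_commutator_eq_subset_smul_centralizer {G : Type*} [Group G] {x y₀ g : G}
    (hy₀ : x * y₀ * x⁻¹ * y₀⁻¹ = g) :
    {y | x * y * x⁻¹ * y⁻¹ = g} ⊆ y₀ • (Subgroup.centralizer {x} : Set G) := by
  rintro y rfl
  refine ⟨y₀⁻¹ * y, Subgroup.mem_centralizer_singleton_iff.2 ?_, by simp⟩
  calc y₀⁻¹ * y * x = y₀⁻¹ * (x * y * x⁻¹ * y⁻¹)⁻¹ * x * y := by group
    _ = x * (y₀⁻¹ * y) := by rw [← hy₀]; group

section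
variable {G : Type*} [Group G] [TopologicalSpace G] [IsTopologicalGroup G] [T2Space G]
    [LocallyCompactSpace G] [ConnectedSpace G] [MeasurableSpace G] [BorelSpace G]
    (μ : Measure G) [μ.IsHaarMeasure] [μ.InnerRegular]

theorem measure_setOf_commutator_eq_eq_zero_of_notMem_center {x : G}
    (hx : x ∉ Subgroup.center G) (g : G) : μ {y | x * y * x⁻¹ * y⁻¹ = g} = 0 := by
  obtain h | ⟨y₀, hy₀⟩ := Set.eq_empty_or_nonempty {y | x * y * x⁻¹ * y⁻¹ = g}
  · rw [h, measure_empty]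
  refine measure_mono_null (setOf_commutator_eq_subset_smul_centralizer hy₀) ?_
  rw [measure_smul]
  refine Subgroup.measure_eq_zero_of_isClosed_of_ne_top μ (Set.isClosed_centralizer _) ?_
  rwa [Ne, Subgroup.centralizer_eq_top_iff_subset, Set.singleton_subset_iff]

theorem Subgroup.measure_center_eq_zero (hG : ∃ x y : G, x * y ≠ y * x) :
    μ (Subgroup.center G) = 0 := by
  refine Subgroup.measure_eq_zero_of_isClosed_of_ne_top μ ?_ ?_
  · rw [Subgroup.coe_center, ← Set.centralizer_univ]
    exact Set.isClosed_centralizer _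
  · obtain ⟨x, y, hxy⟩ := hG
    exact fun h => hxy (Subgroup.mem_center_iff.1 (h ▸ Subgroup.mem_top x) y).symm
end

theorem commutator_fiber_measure_zero_of_compact_lie_general
    {E : Type*} [NormedAddCommGroup E] [NormedSpace ℝ E] [FiniteDimensional ℝ E]
    {H : Type*} [TopologicalSpace H] (I : ModelWithCorners ℝ E H)
    {G : Type*} [Group G] [TopologicalSpace G] [ChartedSpace H G] [LieGroup I (⊤ : ℕ∞) G]
    [CompactSpace G] [ConnectedSpace G] [T2Space G]
    [MeasurableSpace G] [BorelSpace G]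
    (hG : ∃ x y : G, x * y ≠ y * x)
    (μ : Measure G) [μ.IsHaarMeasure]
    (g : G) :
    (μ.prod μ) {p : G × G | p.1 * p.2 * p.1⁻¹ * p.2⁻¹ = g} = 0 := by
  have : IsTopologicalGroup G := topologicalGroup_of_lieGroup I (⊤ : ℕ∞)
  -- second countability makes the Borel σ-algebra of `G × G` the product one
  have := I.secondCountableTopology
  have := ChartedSpace.secondCountable_of_sigmaCompact H G
  have hfiber : IsClosed {p : G × G | p.1 * p.2 * p.1⁻¹ * p.2⁻¹ = g} :=
    isClosed_eq (by fun_prop) continuous_const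
  rw [Measure.measure_prod_null hfiber.measurableSet]
  filter_upwards [measure_eq_zero_iff_ae_notMem.1 (Subgroup.measure_center_eq_zero μ hG)] with x hx
  exact measure_setOf_commutator_eq_eq_zero_of_notMem_center μ hx g

/-- For a non-abelian connected compact Lie group `G` with normalized Haar measure `μ`, every
element `g ∈ G`, the fiber of the commutator map over `g` has `μ × μ`-measure zero. -/
theorem commutator_fiber_measure_zero_of_compact_lie
    {E : Type*} [NormedAddCommGroup E] [NormedSpace ℝ E] [FiniteDimensional ℝ E]
    {H : Type*} [TopologicalSpace H] (I : ModelWithCorners ℝ E H)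
    {G : Type*} [Group G] [TopologicalSpace G] [ChartedSpace H G] [LieGroup I (⊤ : ℕ∞) G]
    [CompactSpace G] [ConnectedSpace G] [T2Space G]
    [MeasurableSpace G] [BorelSpace G]
    (hG : ∃ x y : G, x * y ≠ y * x)
    (μ : Measure G) [μ.IsHaarMeasure] [IsProbabilityMeasure μ]
    (g : G) :
    (μ.prod μ) {p : G × G | p.1 * p.2 * p.1⁻¹ * p.2⁻¹ = g} = 0 :=
  commutator_fiber_measure_zero_of_compact_lie_general I hG μ g
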